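/- Under the Ewens–Pitman weight system, for every integer 1 ≤ l ≤ m, the conditional expectation of the number of old blocks re-observed with frequency l, given only the number of blocks, satisfies E[R_l | K_n = j] = (1/(C(n,j;σ)·(θ+n)_{m↑}))·binom(m,l)·(−σ·(1−σ)_{(l−1)↑})·Σ_{s=1}^{n−(j−1)} binom(n,s)·(θ + n − s + σ)_{(m−l)↑}·C(s,1;σ−l)·C(n−s, j−1; σ). -/

import Mathlib

open Finset

attribute [local instance] Classical.propDecidable

noncomputable section

/-- Rising factorial `x(x+1)⋯(x+N−1)`. -/
def risingFac (x : ℝ) (N : ℕ) : ℝ := ∏ i ∈ Finset.range N, (x + i)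

/-- Falling factorial `x(x−1)⋯(x−N+1)`. -/
def fallingFac (x : ℝ) (N : ℕ) : ℝ := ∏ i ∈ Finset.range N, (x - i)

/-- Noncentral generalized factorial coefficient `C(N,k;σ,γ)`. -/
def gfc (N k : ℕ) (σ γ : ℝ) : ℝ :=
  (1 / (Nat.factorial k : ℝ)) *
    ∑ i ∈ Finset.range (k + 1),
      (-1 : ℝ) ^ i * (Nat.choose k i : ℝ) * risingFac (-(i : ℝ) * σ - γ) N

/-- Central generalized factorial coefficient `C(N,k;σ)`. -/
def cgfc (N k : ℕ) (σ : ℝ) : ℝ := gfc N k σ 0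

/-- Binomial coefficient over `ℤ`, zero unless `0 ≤ b ≤ a`. -/
def ibinom (a b : ℤ) : ℝ :=
  if 0 ≤ b ∧ b ≤ a then (Nat.choose a.toNat b.toNat : ℝ) else 0

/-- Multinomial coefficient `m!/((l!)^r (m−rl)!)`, zero if `rl > m`. -/
def multinom (m l r : ℕ) : ℝ :=
  if r * l ≤ m then
    (Nat.factorial m : ℝ) / ((Nat.factorial l : ℝ) ^ r * (Nat.factorial (m - r * l) : ℝ))
  else 0

/-- `P` is a set partition of the finset `s`. -/
def IsPartOn {α : Type*} (s : Finset α) (P : Finset (Finset α)) : Prop :=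
  (∀ B ∈ P, B ⊆ s) ∧ ∅ ∉ P ∧ ∀ a ∈ s, ∃! B, B ∈ P ∧ a ∈ B

/-- Restriction of a partition to `s`. -/
def restrictPart {α : Type*} [DecidableEq α] (P : Finset (Finset α)) (s : Finset α) :
    Finset (Finset α) := (P.image fun C => C ∩ s).erase ∅

/-- Gibbs probability of a partition with block sizes `|C|` and `VN k` the Gibbs weight. -/
def gibbsW {α : Type*} (σ : ℝ) (VN : ℕ → ℝ) (P : Finset (Finset α)) : ℝ :=
  VN P.card * ∏ C ∈ P, risingFac (1 - σ) (C.card - 1)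

/-- Ewens–Pitman weight system. -/
def EPV (σ θ : ℝ) : ℕ → ℕ → ℝ :=
  fun N k => (∏ i ∈ Finset.range k, (θ + (i : ℝ) * σ)) / risingFac θ N

/-- The "old" elements `{1,…,n}` inside `{1,…,n+m}`. -/
def oldSet (n m : ℕ) : Finset (Fin (n + m)) :=
  Finset.univ.filter fun x => (x : ℕ) < n

/-- Number of new elements in the block of `ρ` containing the old block `Bi`. -/
def Scount (n m : ℕ) (Bi : Finset (Fin (n + m))) (ρ : Finset (Finset (Fin (n + m)))) : ℕ :=
  ∑ C ∈ ρ.filter (fun C => Bi ⊆ C), (C \ oldSet n m).card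

/-- Partitions of `{1,…,n+m}` extending the partition `πP` of the old elements. -/
def extensions (n m : ℕ) (πP : Finset (Finset (Fin (n + m)))) :
    Finset (Finset (Finset (Fin (n + m)))) :=
  Finset.univ.filter fun ρ => IsPartOn Finset.univ ρ ∧ restrictPart ρ (oldSet n m) = πP

/-- Conditional expectation given complete information (the initial partition `πP`). -/
def condExpPi (σ : ℝ) (V : ℕ → ℕ → ℝ) (n m : ℕ) (πP : Finset (Finset (Fin (n + m))))
    (f : Finset (Finset (Fin (n + m))) → ℝ) : ℝ :=
  (∑ ρ ∈ extensions n m πP, f ρ * gibbsW σ (V (n + m)) ρ) /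
    (∑ ρ ∈ extensions n m πP, gibbsW σ (V (n + m)) ρ)

/-- Partitions of `{1,…,n+m}` whose restriction to the old elements has exactly `j` blocks. -/
def withJ (n m j : ℕ) : Finset (Finset (Finset (Fin (n + m)))) :=
  Finset.univ.filter fun ρ =>
    IsPartOn Finset.univ ρ ∧ (restrictPart ρ (oldSet n m)).card = j

/-- Partitions of `s` with exactly `j` blocks. -/
def partsJOf {α : Type*} [Fintype α] (s : Finset α) (j : ℕ) :
    Finset (Finset (Finset α)) :=
  Finset.univ.filter fun π' => IsPartOn s π' ∧ π'.card = j

/-- Conditional expectation given the incomplete information `K_n = j`. -/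
def condExpK (σ : ℝ) (V : ℕ → ℕ → ℝ) (n m j : ℕ)
    (f : Finset (Finset (Fin (n + m))) → ℝ) : ℝ :=
  (∑ ρ ∈ withJ n m j, f ρ * gibbsW σ (V (n + m)) ρ) /
    (∑ π' ∈ partsJOf (oldSet n m) j, gibbsW σ (V n) π')

/-- Number of old blocks (indexed by `B`) re-observed in the additional sample. -/
def RcntB (n m j : ℕ) (B : Fin j → Finset (Fin (n + m)))
    (ρ : Finset (Finset (Fin (n + m)))) : ℕ :=
  (Finset.univ.filter fun i : Fin j => Scount n m (B i) ρ ≠ 0).card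

/-- Number of old blocks (indexed by `B`) re-observed with frequency `l`. -/
def RlcntB (n m j l : ℕ) (B : Fin j → Finset (Fin (n + m)))
    (ρ : Finset (Finset (Fin (n + m)))) : ℕ :=
  (Finset.univ.filter fun i : Fin j => Scount n m (B i) ρ = l).card

/-- Number of blocks of the restriction whose containing block has a new element. -/
def Rcnt (n m : ℕ) (ρ : Finset (Finset (Fin (n + m)))) : ℕ :=
  ((restrictPart ρ (oldSet n m)).filter fun Bi =>
    ∃ C ∈ ρ, Bi ⊆ C ∧ (C \ oldSet n m) ≠ ∅).card

/-- Number of blocks of the restriction whose containing block has exactly `l` new elements. -/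
def Rlcnt (n m l : ℕ) (ρ : Finset (Finset (Fin (n + m)))) : ℕ :=
  ((restrictPart ρ (oldSet n m)).filter fun Bi =>
    ∃ C ∈ ρ, Bi ⊆ C ∧ (C \ oldSet n m).card = l).card

/-- Number of bijections from `Fin j` onto the blocks of `π'` satisfying `Q`. -/
def bijCount {α : Type*} [Fintype α] (j : ℕ) (π' : Finset (Finset α))
    (Q : (Fin j → Finset α) → Prop) : ℕ :=
  ((Finset.univ : Finset (Fin j → Finset α)).filter fun β =>
    Function.Injective β ∧ Finset.image β Finset.univ = π' ∧ Q β).card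

/-- Conditional expectation given almost-complete information. -/
def condExpTau (σ : ℝ) (V : ℕ → ℕ → ℝ) (n m j p : ℕ) (τ : Fin p → Fin j) (nτ : Fin p → ℕ)
    (f : Finset (Finset (Fin (n + m))) → ℝ) : ℝ :=
  (∑ ρ ∈ withJ n m j,
      (bijCount j (restrictPart ρ (oldSet n m)) (fun β => ∀ i, (β (τ i)).card = nτ i) : ℝ) *
        f ρ * gibbsW σ (V (n + m)) ρ) /
    (∑ π' ∈ partsJOf (oldSet n m) j,
      (bijCount j π' (fun β => ∀ i, (β (τ i)).card = nτ i) : ℝ) * gibbsW σ (V n) π')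

/-!
Split the numerator over the restriction `π` of `ρ` to the old points and over the old block `B`
that is counted. Adding the `m` new points one at a time, each either opening a new block or
joining an existing one, shows that the `ρ` extending `π` in which `B` receives exactly `l` new
points carry total Ewens–Pitman weight `w(π) C(m,l) (|B|-σ)_l (θ+n-|B|+σ)_{m-l}`: this follows by
induction from Pascal's rule for rising factorials. Removing `B` from `π` leaves a partition of
the other `n-|B|` old points into `j-1` blocks, and summing `∏_C (1-σ)_{|C|-1}` over the partitions
of `N` points into `k` blocks gives `σ^{-k} C(N,k;σ)`, because both sides satisfy the triangular
recurrence of generalized factorial coefficients. The identities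
`(1-σ)_{t-1} (t-σ)_l = (1-σ)_{l-1} (l-σ)_t` and `C(t,1;σ-l) = -(l-σ)_t` then give the stated form.
-/
section Partitions

variable {α : Type*} {s X : Finset α} {P ρ : Finset (Finset α)} {B B' : Finset α} {a : α}

namespace IsPartOn

theorem subset (h : IsPartOn s P) (hB : B ∈ P) : B ⊆ s := h.1 B hB

theorem ne_empty (h : IsPartOn s P) (hB : B ∈ P) : B ≠ ∅ := fun e => h.2.1 (e ▸ hB)

theorem nonempty (h : IsPartOn s P) (hB : B ∈ P) : B.Nonempty :=
  nonempty_iff_ne_empty.2 (h.ne_empty hB)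

theorem eq_of_mem_of_mem (h : IsPartOn s P) (hB : B ∈ P) (hB' : B' ∈ P) (ha : a ∈ B)
    (ha' : a ∈ B') : B = B' :=
  (h.2.2 a (h.subset hB ha)).unique ⟨hB, ha⟩ ⟨hB', ha'⟩

theorem eq_of_subset_of_subset (h : IsPartOn s P) (hB : B ∈ P) (hB' : B' ∈ P) {B₀ : Finset α}
    (hB₀ : B₀.Nonempty) (hsub : B₀ ⊆ B) (hsub' : B₀ ⊆ B') : B = B' :=
  h.eq_of_mem_of_mem hB hB' (hsub hB₀.choose_spec) (hsub' hB₀.choose_spec)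

theorem exists_mem (h : IsPartOn s P) (ha : a ∈ s) : ∃ B ∈ P, a ∈ B :=
  (h.2.2 a ha).exists

theorem sum_card [DecidableEq α] (h : IsPartOn s P) : ∑ B ∈ P, B.card = s.card := by
  rw [← card_biUnion fun B hB B' hB' hne => disjoint_left.2 fun _ ha ha' =>
    hne (h.eq_of_mem_of_mem hB hB' ha ha')]
  congr 1
  ext a
  simp only [mem_biUnion]
  exact ⟨fun ⟨B, hB, ha⟩ => h.subset hB ha, h.exists_mem⟩

theorem card_le [DecidableEq α] (h : IsPartOn s P) : P.card ≤ s.card := by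
  rw [← h.sum_card, card_eq_sum_ones]
  exact sum_le_sum fun _ hB => card_pos.2 (h.nonempty hB)

end IsPartOn

theorem isPartOn_empty_iff : IsPartOn (∅ : Finset α) P ↔ P = ∅ := by
  refine ⟨fun h => eq_empty_of_forall_notMem fun B hB =>
    h.ne_empty hB (subset_empty.1 (h.subset hB)), ?_⟩
  rintro rfl
  simp [IsPartOn]

def partsOf [Fintype α] (s : Finset α) : Finset (Finset (Finset α)) := univ.filter (IsPartOn s)

theorem mem_partsOf [Fintype α] : ρ ∈ partsOf s ↔ IsPartOn s ρ := by simp [partsOf]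

variable [DecidableEq α]

theorem mem_restrictPart : B ∈ restrictPart ρ s ↔ B ≠ ∅ ∧ ∃ C ∈ ρ, C ∩ s = B := by
  simp [restrictPart, eq_comm]

theorem isPartOn_restrictPart (h : IsPartOn X ρ) (hs : s ⊆ X) :
    IsPartOn s (restrictPart ρ s) := by
  refine ⟨fun B hB => ?_, fun hB => (mem_restrictPart.1 hB).1 rfl, fun a ha => ?_⟩
  · obtain ⟨-, C, -, rfl⟩ := mem_restrictPart.1 hB
    exact inter_subset_right
  · obtain ⟨C, hC, haC⟩ := h.exists_mem (hs ha)
    refine ⟨C ∩ s, ⟨mem_restrictPart.2 ⟨?_, C, hC, rfl⟩, mem_inter.2 ⟨haC, ha⟩⟩, ?_⟩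
    · exact nonempty_iff_ne_empty.1 ⟨a, mem_inter.2 ⟨haC, ha⟩⟩
    · rintro B ⟨hB, haB⟩
      obtain ⟨-, D, hD, rfl⟩ := mem_restrictPart.1 hB
      rw [h.eq_of_mem_of_mem hD hC (mem_inter.1 haB).1 haC]

theorem restrictPart_eq_self (h : IsPartOn s ρ) : restrictPart ρ s = ρ := by
  ext B
  rw [mem_restrictPart]
  refine ⟨?_, fun hB => ⟨h.ne_empty hB, B, hB, inter_eq_left.2 (h.subset hB)⟩⟩
  rintro ⟨-, C, hC, rfl⟩
  rwa [inter_eq_left.2 (h.subset hC)]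

theorem isPartOn_erase (h : IsPartOn s P) (hB : B ∈ P) : IsPartOn (s \ B) (P.erase B) := by
  refine ⟨fun C hC x hx => mem_sdiff.2 ⟨h.subset (mem_of_mem_erase hC) hx, fun hxB =>
      ne_of_mem_erase hC (h.eq_of_mem_of_mem (mem_of_mem_erase hC) hB hx hxB)⟩,
    fun h0 => h.2.1 (mem_of_mem_erase h0), fun b hb => ?_⟩
  obtain ⟨hbs, hbB⟩ := mem_sdiff.1 hb
  obtain ⟨C, hC, hbC⟩ := h.exists_mem hbs
  refine ⟨C, ⟨mem_erase.2 ⟨fun e => hbB (e ▸ hbC), hC⟩, hbC⟩, fun C' ⟨hC', hbC'⟩ =>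
    h.eq_of_mem_of_mem (mem_of_mem_erase hC') hC hbC' hbC⟩

theorem isPartOn_insert (hBs : B ⊆ s) (hB : B.Nonempty) (h : IsPartOn (s \ B) P) :
    IsPartOn s (insert B P) := by
  have hdisj : ∀ C ∈ P, ∀ x ∈ C, x ∉ B := fun C hC x hx => (mem_sdiff.1 (h.subset hC hx)).2
  refine ⟨fun C hC => ?_, fun h0 => ?_, fun b hb => ?_⟩
  · rcases mem_insert.1 hC with rfl | hC
    exacts [hBs, (h.subset hC).trans sdiff_subset]
  · rcases mem_insert.1 h0 with e | h0
    exacts [hB.ne_empty e.symm, h.2.1 h0]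
  · by_cases hbB : b ∈ B
    · refine ⟨B, ⟨mem_insert_self _ _, hbB⟩, fun C ⟨hC, hbC⟩ => ?_⟩
      rcases mem_insert.1 hC with rfl | hC
      exacts [rfl, absurd hbB (hdisj C hC b hbC)]
    · obtain ⟨C, hC, hbC⟩ := h.exists_mem (mem_sdiff.2 ⟨hb, hbB⟩)
      refine ⟨C, ⟨mem_insert_of_mem hC, hbC⟩, fun C' ⟨hC', hbC'⟩ => ?_⟩
      rcases mem_insert.1 hC' with rfl | hC'
      exacts [absurd hbC' hbB, h.eq_of_mem_of_mem hC' hC hbC' hbC]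

theorem notMem_of_isPartOn_sdiff (h : IsPartOn (s \ B) P) (hB : B.Nonempty) : B ∉ P :=
  fun hBP => (mem_sdiff.1 (h.subset hBP hB.choose_spec)).2 hB.choose_spec

/-- Adds the point `a` to the block `C` of `ρ`; for `C = ∅` this opens the new block `{a}`. -/
def addTo (a : α) (C : Finset α) (ρ : Finset (Finset α)) : Finset (Finset α) :=
  insert (insert a C) (ρ.erase C)

theorem IsPartOn.subset_of_mem_insert_empty {C : Finset α} (h : IsPartOn X ρ)
    (hC : C ∈ insert ∅ ρ) : C ⊆ X := by
  rcases mem_insert.1 hC with rfl | hC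
  exacts [empty_subset X, h.subset hC]

theorem isPartOn_addTo {C : Finset α} (h : IsPartOn X ρ) (ha : a ∉ X) (hC : C ∈ insert ∅ ρ) :
    IsPartOn (insert a X) (addTo a C ρ) := by
  refine isPartOn_insert (insert_subset_insert a (h.subset_of_mem_insert_empty hC))
    (insert_nonempty a C) ?_
  rw [insert_sdiff_insert, sdiff_insert_of_notMem ha]
  rcases mem_insert.1 hC with rfl | hC
  · rwa [sdiff_empty, erase_eq_of_notMem h.2.1]
  · exact isPartOn_erase h hC

theorem restrictPart_addTo {C : Finset α} (ha : a ∉ s) (hC : C ∈ insert ∅ ρ) :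
    restrictPart (addTo a C ρ) s = restrictPart ρ s := by
  have hCs : insert a C ∩ s = C ∩ s := insert_inter_of_notMem ha
  ext B
  simp only [mem_restrictPart, addTo, exists_mem_insert, hCs]
  constructor
  · rintro ⟨hB, rfl | ⟨D, hD, rfl⟩⟩
    · refine ⟨hB, C, ?_, rfl⟩
      rcases mem_insert.1 hC with rfl | hC
      · simp at hB
      · exact hC
    · exact ⟨hB, D, mem_of_mem_erase hD, rfl⟩
  · rintro ⟨hB, D, hD, rfl⟩
    refine ⟨hB, ?_⟩
    by_cases hDC : D = C
    · exact Or.inl (hDC ▸ rfl)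
    · exact Or.inr ⟨D, mem_erase.2 ⟨hDC, hD⟩, rfl⟩

theorem restrictPart_addTo_of_isPartOn {C : Finset α} (h : IsPartOn X ρ) (ha : a ∉ X)
    (hC : C ∈ insert ∅ ρ) : restrictPart (addTo a C ρ) X = ρ := by
  rw [restrictPart_addTo ha hC, restrictPart_eq_self h]

theorem IsPartOn.injOn_addTo (h : IsPartOn X ρ) (ha : a ∉ X) :
    Set.InjOn (addTo a · ρ) (↑(insert ∅ ρ : Finset (Finset α))) := by
  intro C hC C' hC' he
  have haC : a ∉ C := fun h' => ha (h.subset_of_mem_insert_empty hC h')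
  have haC' : a ∉ C' := fun h' => ha (h.subset_of_mem_insert_empty hC' h')
  have hmem : insert a C ∈ addTo a C' ρ := by
    rw [← show addTo a C ρ = addTo a C' ρ from he]
    exact mem_insert_self _ _
  rcases mem_insert.1 hmem with e | hmem
  · rw [← erase_insert haC, e, erase_insert haC']
  · exact absurd (h.subset (mem_of_mem_erase hmem) (mem_insert_self a C)) ha

theorem IsPartOn.eq_addTo {D : Finset α} (h : IsPartOn (insert a X) ρ) (ha : a ∉ X)
    (hD : D ∈ ρ) (haD : a ∈ D) :
    D.erase a ∈ insert ∅ (restrictPart ρ X) ∧ addTo a (D.erase a) (restrictPart ρ X) = ρ := by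
  have hDX : D ∩ X = D.erase a := by
    ext x
    simp only [mem_inter, mem_erase]
    refine ⟨fun ⟨hx, hxX⟩ => ⟨ne_of_mem_of_not_mem hxX ha, hx⟩, fun ⟨hxa, hx⟩ => ⟨hx, ?_⟩⟩
    exact (mem_insert.1 (h.subset hD hx)).resolve_left hxa
  have hEX : ∀ E ∈ ρ, E ≠ D → E ∩ X = E := fun E hE hED => inter_eq_left.2 fun x hx =>
    (mem_insert.1 (h.subset hE hx)).resolve_left fun e =>
      hED (h.eq_of_mem_of_mem hE hD (e ▸ hx) haD)
  refine ⟨?_, ?_⟩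
  · by_cases he : D.erase a = ∅
    · exact he ▸ mem_insert_self _ _
    · exact mem_insert_of_mem (mem_restrictPart.2 ⟨he, D, hD, hDX⟩)
  ext B
  rw [addTo, insert_erase haD, mem_insert, mem_erase, mem_restrictPart]
  constructor
  · rintro (rfl | ⟨hBD, -, E, hE, rfl⟩)
    · exact hD
    · by_cases hED : E = D
      · exact absurd (hED ▸ hDX) hBD
      · rwa [hEX E hE hED]
  · intro hB
    by_cases hBD : B = D
    · exact Or.inl hBD
    refine Or.inr ⟨fun e => hBD ?_, h.ne_empty hB, B, hB, hEX B hB hBD⟩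
    obtain ⟨x, hx⟩ := h.nonempty hB
    exact h.eq_of_mem_of_mem hB hD hx (mem_of_mem_erase (e ▸ hx))

theorem sum_partsOf_insert [Fintype α] {M : Type*} [AddCommMonoid M] (ha : a ∉ X)
    (F : Finset (Finset α) → M) :
    ∑ ρ ∈ partsOf (insert a X), F ρ = ∑ ρ₀ ∈ partsOf X, ∑ C ∈ insert ∅ ρ₀, F (addTo a C ρ₀) := by
  rw [← sum_fiberwise_of_maps_to (g := (restrictPart · X)) (t := partsOf X)
    fun ρ hρ => mem_partsOf.2 (isPartOn_restrictPart (mem_partsOf.1 hρ) (subset_insert a X))]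
  refine sum_congr rfl fun ρ₀ hρ₀ => ?_
  replace hρ₀ : IsPartOn X ρ₀ := mem_partsOf.1 hρ₀
  rw [← sum_image (hρ₀.injOn_addTo ha)]
  congr 1
  ext ρ
  simp only [mem_filter, mem_partsOf, mem_image]
  constructor
  · rintro ⟨hρ, rfl⟩
    obtain ⟨D, hD, haD⟩ := hρ.exists_mem (mem_insert_self a X)
    exact ⟨_, (hρ.eq_addTo ha hD haD).1, (hρ.eq_addTo ha hD haD).2⟩
  · rintro ⟨C, hC, rfl⟩
    exact ⟨isPartOn_addTo hρ₀ ha hC, restrictPart_addTo_of_isPartOn hρ₀ ha hC⟩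

end Partitions

section Factorials

theorem risingFac_zero (x : ℝ) : risingFac x 0 = 1 := prod_range_zero _

theorem risingFac_succ (x : ℝ) (N : ℕ) : risingFac x (N + 1) = risingFac x N * (x + N) :=
  prod_range_succ _ _

theorem risingFac_add (x : ℝ) (a b : ℕ) :
    risingFac x (a + b) = risingFac x a * risingFac (x + a) b := by
  rw [risingFac, prod_range_add]
  exact congrArg _ (prod_congr rfl fun i _ => by push_cast; ring)

theorem risingFac_zero_left {N : ℕ} (hN : N ≠ 0) : risingFac 0 N = 0 :=
  prod_eq_zero (mem_range.2 (Nat.pos_of_ne_zero hN)) (by simp)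

theorem risingFac_sub_mul_comm (σ : ℝ) {t l : ℕ} (ht : 1 ≤ t) (hl : 1 ≤ l) :
    risingFac (1 - σ) (t - 1) * risingFac (t - σ) l =
      risingFac (1 - σ) (l - 1) * risingFac (l - σ) t := by
  have key : ∀ {a b : ℕ}, 1 ≤ a →
      risingFac (1 - σ) (a - 1) * risingFac (a - σ) b = risingFac (1 - σ) (a - 1 + b) := by
    intro a b ha
    rw [risingFac_add, Nat.cast_sub ha]
    push_cast
    ring_nf
  rw [key ht, key hl, show t - 1 + l = l - 1 + t by omega]

/-- Pascal's rule for `t ↦ C(t, l) (y)_l (x)_{t-l}`, the terms of the binomial theorem for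
rising factorials. -/
theorem risingFac_binomial_succ (x y : ℝ) (t l : ℕ) :
    (x + t - (l + 1)) * ((t.choose (l + 1) : ℝ) * risingFac y (l + 1) * risingFac x (t - (l + 1)))
      + (y + l) * ((t.choose l : ℝ) * risingFac y l * risingFac x (t - l)) =
    ((t + 1).choose (l + 1) : ℝ) * risingFac y (l + 1) * risingFac x (t - l) := by
  rcases lt_trichotomy t l with h | rfl | h
  · simp [Nat.choose_eq_zero_of_lt h, Nat.choose_eq_zero_of_lt (h.trans (Nat.lt_succ_self l)),
      Nat.choose_eq_zero_of_lt (Nat.succ_lt_succ h)]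
  · simp [risingFac_succ]
    ring
  · obtain ⟨d, rfl⟩ := Nat.exists_eq_add_of_lt h
    rw [show l + d + 1 - (l + 1) = d by omega, show l + d + 1 - l = d + 1 by omega,
      Nat.choose_succ_succ (l + d + 1), risingFac_succ y, risingFac_succ x]
    push_cast
    ring

theorem cgfc_zero_left (k : ℕ) (σ : ℝ) : cgfc 0 k σ = if k = 0 then 1 else 0 := by
  have h := congrArg (Int.cast : ℤ → ℝ) (Int.alternating_sum_range_choose (n := k))
  push_cast at h
  simp only [cgfc, gfc, risingFac_zero, mul_one, h]
  split_ifs with hk <;> simp [hk]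

theorem cgfc_succ_zero (N : ℕ) (σ : ℝ) : cgfc (N + 1) 0 σ = 0 := by
  simp [cgfc, gfc, risingFac_zero_left]

theorem cgfc_succ_succ (N k : ℕ) (σ : ℝ) :
    cgfc (N + 1) (k + 1) σ = σ * cgfc N k σ + (N - (k + 1) * σ) * cgfc N (k + 1) σ := by
  have hchoose (i : ℕ) : ((k + 1).choose i : ℝ) * (k + 1 - i) = (k + 1) * k.choose i := by
    rcases le_or_gt i (k + 1) with hi | hi
    · have h : ((k.choose i * (k + 1) : ℕ) : ℝ) = ((k + 1).choose i * (k + 1 - i) : ℕ) :=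
        congrArg _ (Nat.choose_mul_succ_eq k i)
      push_cast [Nat.cast_sub hi] at h
      linarith
    · simp [Nat.choose_eq_zero_of_lt hi, Nat.choose_eq_zero_of_lt (by omega : k < i)]
  have hlast : ∑ i ∈ range (k + 2), (-1 : ℝ) ^ i * k.choose i * risingFac (-i * σ - 0) N =
      ∑ i ∈ range (k + 1), (-1 : ℝ) ^ i * k.choose i * risingFac (-i * σ - 0) N := by
    rw [sum_range_succ]
    simp
  have hsum : ∑ i ∈ range (k + 2), (-1 : ℝ) ^ i * (k + 1).choose i * risingFac (-i * σ - 0) (N + 1)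
      = (N - (k + 1) * σ) *
          ∑ i ∈ range (k + 2), (-1 : ℝ) ^ i * (k + 1).choose i * risingFac (-i * σ - 0) N
        + σ * (k + 1) *
          ∑ i ∈ range (k + 1), (-1 : ℝ) ^ i * k.choose i * risingFac (-i * σ - 0) N := by
    rw [← hlast, mul_sum, mul_sum, ← sum_add_distrib]
    refine sum_congr rfl fun i _ => ?_
    rw [risingFac_succ]
    linear_combination (-1 : ℝ) ^ i * risingFac (-i * σ - 0) N * σ * hchoose i
  simp only [cgfc, gfc]
  rw [hsum, Nat.factorial_succ]
  push_cast
  field_simp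
  ring

theorem cgfc_one {t : ℕ} (ht : t ≠ 0) (x : ℝ) : cgfc t 1 x = -risingFac (-x) t := by
  simp [cgfc, gfc, sum_range_succ, risingFac_zero_left ht]

end Factorials

section Weights

variable {α : Type*} {X : Finset α} {ρ : Finset (Finset α)} {a : α} {C : Finset α}

def blockWeight (σ : ℝ) (ρ : Finset (Finset α)) : ℝ := ∏ B ∈ ρ, risingFac (1 - σ) (B.card - 1)

/-- The Ewens–Pitman probability of `ρ` without its normalisation `1/(θ)_N`. -/
def epWeight (σ θ : ℝ) (ρ : Finset (Finset α)) : ℝ :=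
  (∏ i ∈ range ρ.card, (θ + i * σ)) * blockWeight σ ρ

theorem gibbsW_EPV (σ θ : ℝ) (N : ℕ) (ρ : Finset (Finset α)) :
    gibbsW σ (EPV σ θ N) ρ = epWeight σ θ ρ / risingFac θ N := by
  simp only [gibbsW, EPV, epWeight, blockWeight]
  ring

theorem mem_partsJOf [Fintype α] {s : Finset α} {j : ℕ} :
    ρ ∈ partsJOf s j ↔ IsPartOn s ρ ∧ ρ.card = j := by
  simp [partsJOf]

theorem partsJOf_eq_filter [Fintype α] (s : Finset α) (j : ℕ) :
    partsJOf s j = (partsOf s).filter (·.card = j) := by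
  rw [partsOf, filter_filter]
  rfl

variable [DecidableEq α]

theorem IsPartOn.sum_card_sub (σ : ℝ) (h : IsPartOn X ρ) :
    ∑ B ∈ ρ, ((B.card : ℝ) - σ) = X.card - ρ.card * σ := by
  rw [sum_sub_distrib, ← Nat.cast_sum, h.sum_card, sum_const, nsmul_eq_mul]

theorem IsPartOn.insert_notMem_erase (h : IsPartOn X ρ) (ha : a ∉ X) : insert a C ∉ ρ.erase C :=
  fun hC => ha (h.subset (mem_of_mem_erase hC) (mem_insert_self a C))

theorem card_addTo (h : IsPartOn X ρ) (ha : a ∉ X) (hC : C ∈ insert ∅ ρ) :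
    (addTo a C ρ).card = if C = ∅ then ρ.card + 1 else ρ.card := by
  rw [addTo, card_insert_of_notMem (h.insert_notMem_erase ha)]
  split_ifs with hC0
  · rw [hC0, erase_eq_of_notMem h.2.1]
  · have hCρ := (mem_insert.1 hC).resolve_left hC0
    rw [card_erase_add_one hCρ]

theorem blockWeight_addTo (σ : ℝ) (h : IsPartOn X ρ) (ha : a ∉ X) (hC : C ∈ insert ∅ ρ) :
    blockWeight σ (addTo a C ρ) = (if C = ∅ then 1 else C.card - σ) * blockWeight σ ρ := by
  rw [blockWeight, addTo, prod_insert (h.insert_notMem_erase ha)]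
  split_ifs with hC0
  · subst hC0
    simp [erase_eq_of_notMem h.2.1, risingFac_zero, blockWeight]
  · have hCρ := (mem_insert.1 hC).resolve_left hC0
    have haC : a ∉ C := fun haC => ha (h.subset hCρ haC)
    have hpos : 1 ≤ C.card := card_pos.2 (h.nonempty hCρ)
    rw [blockWeight, ← mul_prod_erase ρ _ hCρ, card_insert_of_notMem haC,
      show C.card + 1 - 1 = C.card - 1 + 1 by omega, risingFac_succ, Nat.cast_sub hpos]
    push_cast
    ring

theorem epWeight_addTo (σ θ : ℝ) (h : IsPartOn X ρ) (ha : a ∉ X) (hC : C ∈ insert ∅ ρ) :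
    epWeight σ θ (addTo a C ρ) =
      (if C = ∅ then θ + ρ.card * σ else C.card - σ) * epWeight σ θ ρ := by
  rw [epWeight, epWeight, card_addTo h ha hC, blockWeight_addTo σ h ha hC]
  split_ifs
  · rw [prod_range_succ]
    ring
  · ring

theorem sum_addTo_blockWeight (σ : ℝ) (h : IsPartOn X ρ) (ha : a ∉ X) (j : ℕ) :
    ∑ C ∈ insert ∅ ρ,
        (if (addTo a C ρ).card = j + 1 then blockWeight σ (addTo a C ρ) else 0) =
      (if ρ.card = j then blockWeight σ ρ else 0) +
        (X.card - (j + 1) * σ) * (if ρ.card = j + 1 then blockWeight σ ρ else 0) := by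
  have h0 := mem_insert_self ∅ ρ
  rw [sum_insert h.2.1, card_addTo h ha h0, blockWeight_addTo σ h ha h0, if_pos rfl, if_pos rfl,
    one_mul]
  simp only [Nat.add_right_cancel_iff]
  congr 1
  rw [sum_congr rfl fun C hC => by
    rw [card_addTo h ha (mem_insert_of_mem hC), blockWeight_addTo σ h ha (mem_insert_of_mem hC),
      if_neg (h.ne_empty hC), if_neg (h.ne_empty hC)]]
  split_ifs with hj
  · rw [← sum_mul, h.sum_card_sub σ, hj]
    push_cast
    ring
  · simp

theorem cgfc_card_eq_sum_partsJOf [Fintype α] (σ : ℝ) (s : Finset α) (j : ℕ) :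
    cgfc s.card j σ = σ ^ j * ∑ π ∈ partsJOf s j, blockWeight σ π := by
  rw [partsJOf_eq_filter, sum_filter]
  induction s using Finset.induction_on generalizing j with
  | empty =>
    have : partsOf (∅ : Finset α) = {∅} := by ext; simp [mem_partsOf, isPartOn_empty_iff]
    rw [this, sum_singleton, card_empty, cgfc_zero_left]
    split_ifs <;> simp_all [blockWeight, eq_comm]
  | insert a s ha ih =>
    rw [sum_partsOf_insert ha, card_insert_of_notMem ha]
    rcases j with _ | j
    · refine (cgfc_succ_zero _ σ).trans (mul_eq_zero_of_right _ ?_).symm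
      exact sum_eq_zero fun ρ₀ _ => sum_eq_zero fun C _ =>
        if_neg (card_pos.2 ⟨insert a C, mem_insert_self _ (ρ₀.erase C)⟩).ne'
    · rw [sum_congr rfl fun ρ₀ hρ₀ => sum_addTo_blockWeight σ (mem_partsOf.1 hρ₀) ha j,
        sum_add_distrib, ← mul_sum, cgfc_succ_succ, ih, ih]
      ring

theorem cgfc_eq_zero_of_lt {N k : ℕ} (h : N < k) (σ : ℝ) : cgfc N k σ = 0 := by
  have hN : (univ : Finset (Fin N)).card = N := card_fin N
  rw [← hN, cgfc_card_eq_sum_partsJOf, sum_eq_zero, mul_zero]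
  intro π hπ
  obtain ⟨hπ, hk⟩ := mem_partsJOf.1 hπ
  exact absurd hπ.card_le (by omega)

end Weights

section Extensions

variable {α : Type*} [DecidableEq α] {s X : Finset α} {ρ π : Finset (Finset α)} {a : α}
  {B D : Finset α}

def Reobserved (s : Finset α) (l : ℕ) (ρ : Finset (Finset α)) (B : Finset α) : Prop :=
  ∃ C ∈ ρ, B ⊆ C ∧ (C \ s).card = l

theorem reobserved_iff {l : ℕ} (h : IsPartOn X ρ) (hD : D ∈ ρ) (hB : B.Nonempty) (hBD : B ⊆ D) :
    Reobserved s l ρ B ↔ (D \ s).card = l :=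
  ⟨fun ⟨_, hC, hBC, hl⟩ => h.eq_of_subset_of_subset hD hC hB hBD hBC ▸ hl,
    fun hl => ⟨D, hD, hBD, hl⟩⟩

theorem sum_addTo_factor (θ σ : ℝ) (h : IsPartOn X ρ) :
    ∑ C ∈ insert ∅ ρ, (if C = ∅ then θ + ρ.card * σ else (C.card : ℝ) - σ) = θ + X.card := by
  rw [sum_insert h.2.1, if_pos rfl,
    sum_congr rfl fun C hC => if_neg (h.ne_empty hC), h.sum_card_sub σ]
  ring

theorem reobserved_addTo_iff {C : Finset α} {l : ℕ} (h : IsPartOn X ρ) (ha : a ∉ X)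
    (has : a ∉ s) (hD : D ∈ ρ) (hB : (D ∩ s).Nonempty) (hC : C ∈ insert ∅ ρ) :
    Reobserved s l (addTo a C ρ) (D ∩ s) ↔
      (if C = D then (D \ s).card + 1 else (D \ s).card) = l := by
  have hpart := isPartOn_addTo h ha hC
  split_ifs with hCD
  · subst hCD
    have haC : a ∉ C \ s := fun h' => ha (h.subset hD (mem_sdiff.1 h').1)
    rw [reobserved_iff hpart (mem_insert_self _ _) hB (inter_subset_left.trans
      (subset_insert a C)), insert_sdiff_of_notMem _ has, card_insert_of_notMem haC]
  · exact reobserved_iff hpart (mem_insert_of_mem (mem_erase.2 ⟨Ne.symm hCD, hD⟩)) hB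
      inter_subset_left

/-- The block containing `B` gains a new point only when `a` joins that block. -/
theorem sum_addTo_reobserved (σ θ : ℝ) (h : IsPartOn X ρ) (ha : a ∉ X) (has : a ∉ s)
    (hB : B ∈ restrictPart ρ s) (l : ℕ) :
    ∑ C ∈ insert ∅ ρ,
        (if Reobserved s l (addTo a C ρ) B then epWeight σ θ (addTo a C ρ) else 0) =
      (θ + X.card - B.card - l + σ) * (if Reobserved s l ρ B then epWeight σ θ ρ else 0) +
        (B.card + l - 1 - σ) *
          (if 0 < l ∧ Reobserved s (l - 1) ρ B then epWeight σ θ ρ else 0) := by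
  obtain ⟨hB0, D, hD, rfl⟩ := mem_restrictPart.1 hB
  have hBne : (D ∩ s).Nonempty := nonempty_iff_ne_empty.2 hB0
  have hDcard : (D.card : ℝ) = (D ∩ s).card + (D \ s).card := by
    exact_mod_cast (card_inter_add_card_sdiff D s).symm
  have hold : ∀ l', Reobserved s l' ρ (D ∩ s) ↔ (D \ s).card = l' := fun l' =>
    reobserved_iff h hD hBne inter_subset_left
  set c := (D \ s).card
  have hDmem : D ∈ insert ∅ ρ := mem_insert_of_mem hD
  have hrest : ∀ w : ℝ, ∑ C ∈ (insert ∅ ρ).erase D, (if (if C = D then c + 1 else c) = l then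
      (if C = ∅ then θ + ρ.card * σ else (C.card : ℝ) - σ) * w else 0) =
      if c = l then (θ + X.card - (D.card - σ)) * w else 0 := by
    intro w
    rw [sum_congr rfl fun C hC => by rw [if_neg (ne_of_mem_erase hC)]]
    split_ifs with hcl
    · rw [← sum_mul, sum_erase_eq_sub hDmem, sum_addTo_factor θ σ h, if_neg (h.ne_empty hD)]
    · exact sum_const_zero
  rw [sum_congr rfl fun C hC => by
      rw [if_congr (reobserved_addTo_iff h ha has hD hBne hC) rfl rfl, epWeight_addTo σ θ h ha hC],
    ← add_sum_erase _ _ hDmem, if_pos rfl, if_neg (h.ne_empty hD), hrest,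
    if_congr (hold l) rfl rfl, if_congr (show 0 < l ∧ Reobserved s (l - 1) ρ (D ∩ s) ↔ c + 1 = l by
      rw [hold]; omega) rfl rfl]
  by_cases hcl : c = l
  · subst hcl
    rw [if_neg (Nat.succ_ne_self c), if_pos rfl, if_pos rfl, if_neg (Nat.succ_ne_self c), hDcard]
    ring
  by_cases hcl' : c + 1 = l
  · subst hcl'
    rw [if_pos rfl, if_neg hcl, if_neg hcl, if_pos rfl, hDcard]
    push_cast
    ring
  rw [if_neg hcl', if_neg hcl, if_neg hcl, if_neg hcl']
  ring

theorem sum_addTo_restrictPart_reobserved (σ θ : ℝ) (h : IsPartOn X ρ) (ha : a ∉ X)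
    (has : a ∉ s) (hB : B ∈ π) (l : ℕ) :
    ∑ C ∈ insert ∅ ρ, (if restrictPart (addTo a C ρ) s = π ∧ Reobserved s l (addTo a C ρ) B
        then epWeight σ θ (addTo a C ρ) else 0) =
      (θ + X.card - B.card - l + σ) *
          (if restrictPart ρ s = π ∧ Reobserved s l ρ B then epWeight σ θ ρ else 0) +
        (B.card + l - 1 - σ) * (if restrictPart ρ s = π ∧ 0 < l ∧ Reobserved s (l - 1) ρ B
          then epWeight σ θ ρ else 0) := by
  rw [sum_congr rfl fun C hC => by rw [restrictPart_addTo has hC]]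
  by_cases hres : restrictPart ρ s = π
  · simp only [hres, true_and]
    exact sum_addTo_reobserved σ θ h ha has (hres ▸ hB) l
  · simp [hres]

theorem sum_reobserved_epWeight [Fintype α] (σ θ : ℝ) (hπ : IsPartOn s π) (hB : B ∈ π)
    {T : Finset α} (hT : Disjoint T s) (l : ℕ) :
    ∑ ρ ∈ partsOf (s ∪ T),
        (if restrictPart ρ s = π ∧ Reobserved s l ρ B then epWeight σ θ ρ else 0) =
      epWeight σ θ π * T.card.choose l * risingFac (B.card - σ) l *
        risingFac (θ + s.card - B.card + σ) (T.card - l) := by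
  induction T using Finset.induction_on generalizing l with
  | empty =>
    rw [union_empty, sum_eq_single_of_mem π (mem_partsOf.2 hπ) fun ρ hρ hne =>
        if_neg fun hc => hne (restrictPart_eq_self (mem_partsOf.1 hρ) ▸ hc.1),
      restrictPart_eq_self hπ, reobserved_iff hπ hB (hπ.nonempty hB) subset_rfl,
      sdiff_eq_empty_iff_subset.2 (hπ.subset hB), card_empty]
    rcases l with _ | l <;> simp [risingFac_zero]
  | insert a T ha ih =>
    have has : a ∉ s := disjoint_left.1 hT (mem_insert_self a T)
    have haX : a ∉ s ∪ T := by simp [has, ha]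
    replace hT : Disjoint T s := hT.mono_left (subset_insert a T)
    rw [union_insert, sum_partsOf_insert haX, sum_congr rfl fun ρ₀ hρ₀ =>
      sum_addTo_restrictPart_reobserved σ θ (mem_partsOf.1 hρ₀) haX has hB l, sum_add_distrib,
      ← mul_sum, ← mul_sum, ih hT, card_insert_of_notMem ha, card_union_of_disjoint hT.symm]
    rcases l with _ | l
    · simp only [lt_irrefl, false_and, and_false, if_false, sum_const_zero, mul_zero, add_zero,
        Nat.choose_zero_right, risingFac_zero, Nat.sub_zero, risingFac_succ]
      push_cast
      ring
    · simp only [Nat.succ_pos, true_and, Nat.add_sub_cancel]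
      rw [ih hT, show T.card + 1 - (l + 1) = T.card - l by omega]
      push_cast
      linear_combination epWeight σ θ π *
        risingFac_binomial_succ (θ + s.card - B.card + σ) (B.card - σ) T.card l

end Extensions

section Blocks

variable {α : Type*} [Fintype α] [DecidableEq α] {s B : Finset α}

theorem filter_mem_partsJOf_succ (hBs : B ⊆ s) (hB : B.Nonempty) (j : ℕ) :
    (partsJOf s (j + 1)).filter (B ∈ ·) = (partsJOf (s \ B) j).image (insert B) := by
  ext π
  simp only [mem_filter, mem_image, mem_partsJOf]
  constructor
  · rintro ⟨⟨hπ, hcard⟩, hBπ⟩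
    exact ⟨π.erase B, ⟨isPartOn_erase hπ hBπ, by rw [card_erase_of_mem hBπ, hcard]; rfl⟩,
      insert_erase hBπ⟩
  · rintro ⟨π', ⟨hπ', hcard⟩, rfl⟩
    exact ⟨⟨isPartOn_insert hBs hB hπ', by
      rw [card_insert_of_notMem (notMem_of_isPartOn_sdiff hπ' hB), hcard]⟩,
      mem_insert_self _ _⟩

theorem sum_partsJOf_succ_sum_mem (f g : Finset α → ℝ) (j : ℕ) :
    ∑ π ∈ partsJOf s (j + 1), ∑ B ∈ π, g B * ∏ C ∈ π, f C =
      ∑ B ∈ s.powerset.filter (·.Nonempty),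
        g B * f B * ∑ π ∈ partsJOf (s \ B) j, ∏ C ∈ π, f C := by
  rw [sum_comm' (t' := s.powerset.filter (·.Nonempty))
    (s' := fun B => (partsJOf s (j + 1)).filter (B ∈ ·)) fun π B => ?_]
  · refine sum_congr rfl fun B hB => ?_
    obtain ⟨hBs, hB⟩ := mem_filter.1 hB
    rw [filter_mem_partsJOf_succ (mem_powerset.1 hBs) hB, sum_image, mul_sum]
    · refine sum_congr rfl fun π hπ => ?_
      rw [prod_insert (notMem_of_isPartOn_sdiff (mem_partsJOf.1 hπ).1 hB)]
      ring
    · intro π₁ h₁ π₂ h₂ he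
      rw [← erase_insert (notMem_of_isPartOn_sdiff (mem_partsJOf.1 h₁).1 hB), he,
        erase_insert (notMem_of_isPartOn_sdiff (mem_partsJOf.1 h₂).1 hB)]
  · simp only [mem_filter, mem_powerset, mem_partsJOf]
    constructor
    · rintro ⟨hπ, hBπ⟩
      exact ⟨⟨hπ, hBπ⟩, hπ.1.subset hBπ, hπ.1.nonempty hBπ⟩
    · rintro ⟨hπ, -⟩
      exact hπ

end Blocks

theorem sum_filter_nonempty_powerset {α : Type*} (s : Finset α) (F : ℕ → ℝ) :
    ∑ B ∈ s.powerset.filter (·.Nonempty), F B.card =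
      ∑ t ∈ Icc 1 s.card, s.card.choose t * F t := by
  simp_rw [sum_filter, ← card_pos]
  rw [sum_powerset_apply_card (fun t => if 0 < t then F t else 0)]
  refine (sum_subset (fun t ht => mem_range.2 (by simp at ht; omega)) fun t hr ht => ?_).symm.trans
    (sum_congr rfl fun t ht => ?_)
  · rw [mem_Icc] at ht
    rw [mem_range] at hr
    rw [if_neg (by omega), smul_zero]
  · rw [if_pos (show 0 < t from (mem_Icc.1 ht).1), nsmul_eq_mul]

section Assembly

variable {α : Type*} [Fintype α] [DecidableEq α]

theorem sum_card_filter_reobserved_mul (s : Finset α) (j l : ℕ) (w : Finset (Finset α) → ℝ) :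
    ∑ ρ ∈ univ.filter (fun ρ => IsPartOn univ ρ ∧ (restrictPart ρ s).card = j),
        (((restrictPart ρ s).filter (Reobserved s l ρ)).card : ℝ) * w ρ =
      ∑ π ∈ partsJOf s j, ∑ B ∈ π, ∑ ρ ∈ partsOf univ,
        if restrictPart ρ s = π ∧ Reobserved s l ρ B then w ρ else 0 := by
  simp_rw [ite_and]
  rw [sum_congr rfl fun π _ => sum_comm, sum_comm, partsOf, ← filter_filter, sum_filter]
  refine sum_congr rfl fun ρ hρ => ?_
  have hpart : IsPartOn s (restrictPart ρ s) :=
    isPartOn_restrictPart (mem_filter.1 hρ).2 (subset_univ s)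
  simp_rw [sum_ite_irrel, sum_const_zero, sum_ite_eq, mem_partsJOf, hpart, true_and, ← sum_filter,
    sum_const, nsmul_eq_mul]

theorem sum_card_filter_reobserved_mul_epWeight (σ θ : ℝ) (s : Finset α) (j l : ℕ) :
    ∑ ρ ∈ univ.filter (fun ρ => IsPartOn univ ρ ∧ (restrictPart ρ s).card = j + 1),
        (((restrictPart ρ s).filter (Reobserved s l ρ)).card : ℝ) * epWeight σ θ ρ =
      (∏ i ∈ range (j + 1), (θ + i * σ)) * ∑ B ∈ s.powerset.filter (·.Nonempty),
        sᶜ.card.choose l * risingFac (B.card - σ) l *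
          risingFac (θ + s.card - B.card + σ) (sᶜ.card - l) * risingFac (1 - σ) (B.card - 1) *
            ∑ π ∈ partsJOf (s \ B) j, blockWeight σ π := by
  rw [sum_card_filter_reobserved_mul, ← union_compl s]
  have hblocks : ∀ π ∈ partsJOf s (j + 1), epWeight σ θ π =
      (∏ i ∈ range (j + 1), (θ + i * σ)) * blockWeight σ π := fun π hπ => by
    rw [epWeight, (mem_partsJOf.1 hπ).2]
  rw [sum_congr rfl fun π hπ => sum_congr rfl fun B hB => by
    rw [sum_reobserved_epWeight σ θ (mem_partsJOf.1 hπ).1 hB disjoint_compl_left l,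
      hblocks π hπ]]
  set P := ∏ i ∈ range (j + 1), (θ + i * σ)
  set G : Finset α → ℝ := fun B => sᶜ.card.choose l * risingFac (B.card - σ) l *
    risingFac (θ + s.card - B.card + σ) (sᶜ.card - l)
  calc _ = ∑ π ∈ partsJOf s (j + 1), ∑ B ∈ π,
        P * G B * ∏ C ∈ π, risingFac (1 - σ) (C.card - 1) :=
      sum_congr rfl fun π _ => sum_congr rfl fun B _ => by rw [blockWeight]; ring
    _ = _ := by
      rw [sum_partsJOf_succ_sum_mem, mul_sum]
      exact sum_congr rfl fun B _ => by simp only [blockWeight, G]; ring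

theorem sum_cgfc_one_mul_cgfc (σ θ : ℝ) (s : Finset α) (j l m : ℕ) (hl : l ≠ 0) :
    (m.choose l : ℝ) * (-σ * risingFac (1 - σ) (l - 1)) *
        ∑ t ∈ Icc 1 (s.card - j), (s.card.choose t : ℝ) * risingFac (θ + s.card - t + σ) (m - l) *
          cgfc t 1 (σ - l) * cgfc (s.card - t) j σ =
      σ ^ (j + 1) * ∑ B ∈ s.powerset.filter (·.Nonempty),
        m.choose l * risingFac (B.card - σ) l * risingFac (θ + s.card - B.card + σ) (m - l) *
          risingFac (1 - σ) (B.card - 1) * ∑ π ∈ partsJOf (s \ B) j, blockWeight σ π := by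
  set F : ℕ → ℝ := fun t => m.choose l * risingFac (t - σ) l *
    risingFac (θ + s.card - t + σ) (m - l) * risingFac (1 - σ) (t - 1) * (σ * cgfc (s.card - t) j σ)
  have hterm : ∀ B ∈ s.powerset.filter (·.Nonempty),
      σ ^ (j + 1) * (m.choose l * risingFac (B.card - σ) l *
        risingFac (θ + s.card - B.card + σ) (m - l) * risingFac (1 - σ) (B.card - 1) *
          ∑ π ∈ partsJOf (s \ B) j, blockWeight σ π) = F B.card := fun B hB => by
    simp only [F]
    rw [← card_sdiff_of_subset (mem_powerset.1 (mem_filter.1 hB).1), cgfc_card_eq_sum_partsJOf]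
    ring
  rw [mul_sum, mul_sum, sum_congr rfl hterm, sum_filter_nonempty_powerset]
  refine (sum_subset (Icc_subset_Icc_right (Nat.sub_le _ _)) fun t ht ht' => ?_).trans
    (sum_congr rfl fun t ht => ?_)
  · simp only [mem_Icc, not_and, not_le] at ht ht'
    rw [cgfc_eq_zero_of_lt (N := s.card - t) (k := j) (by omega)]
    ring
  · have ht1 : 1 ≤ t := (mem_Icc.1 ht).1
    rw [cgfc_one (by omega), neg_sub]
    linear_combination -(m.choose l : ℝ) * s.card.choose t *
      risingFac (θ + s.card - t + σ) (m - l) * σ * cgfc (s.card - t) j σ *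
        risingFac_sub_mul_comm σ ht1 (Nat.one_le_iff_ne_zero.2 hl)

end Assembly

theorem card_oldSet (n m : ℕ) : (oldSet n m).card = n := by
  rw [oldSet]
  convert Fin.card_filter_val_lt (n := n + m) (m := n)
  omega

theorem card_compl_oldSet (n m : ℕ) : (oldSet n m)ᶜ.card = m := by
  rw [card_compl, card_oldSet, Fintype.card_fin]
  omega

theorem Rlcnt_eq_card_filter_reobserved (n m l : ℕ) (ρ : Finset (Finset (Fin (n + m)))) :
    Rlcnt n m l ρ = ((restrictPart ρ (oldSet n m)).filter (Reobserved (oldSet n m) l ρ)).card := by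
  unfold Rlcnt Reobserved
  congr

theorem sum_partsJOf_gibbsW {α : Type*} [Fintype α] (σ : ℝ) (VN : ℕ → ℝ) (s : Finset α)
    (j : ℕ) : ∑ π ∈ partsJOf s j, gibbsW σ VN π = VN j * ∑ π ∈ partsJOf s j, blockWeight σ π := by
  rw [mul_sum]
  exact sum_congr rfl fun π hπ => by rw [gibbsW, (mem_partsJOf.1 hπ).2]; rfl

theorem sum_withJ_Rlcnt_mul_gibbsW_EPV (σ θ : ℝ) (n m j l : ℕ) :
    ∑ ρ ∈ withJ n m (j + 1), (Rlcnt n m l ρ : ℝ) * gibbsW σ (EPV σ θ (n + m)) ρ =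
      EPV σ θ n (j + 1) * ((∑ B ∈ (oldSet n m).powerset.filter (·.Nonempty),
        m.choose l * risingFac (B.card - σ) l * risingFac (θ + n - B.card + σ) (m - l) *
          risingFac (1 - σ) (B.card - 1) * ∑ π ∈ partsJOf (oldSet n m \ B) j, blockWeight σ π) /
        risingFac (θ + n) m) := by
  have hnum := sum_card_filter_reobserved_mul_epWeight σ θ (oldSet n m) j l
  rw [card_oldSet, card_compl_oldSet] at hnum
  simp_rw [gibbsW_EPV, mul_div_assoc', ← sum_div, Rlcnt_eq_card_filter_reobserved]
  rw [withJ, hnum, EPV, risingFac_add]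
  ring

theorem looking_backward_freq_estimator_incomplete_EP_general
    (n m j : ℕ) (hj1 : 1 ≤ j)
    (σ θ : ℝ) (hσ0 : 0 < σ)
    (hVnj : 0 < EPV σ θ n j)
    (l : ℕ) (hl1 : 1 ≤ l) :
    condExpK σ (EPV σ θ) n m j (fun ρ => (Rlcnt n m l ρ : ℝ)) =
      (1 / (cgfc n j σ * risingFac (θ + n) m)) * (Nat.choose m l : ℝ) *
        (-σ * risingFac (1 - σ) (l - 1)) *
        ∑ s ∈ Finset.Icc 1 (n - (j - 1)),
          (Nat.choose n s : ℝ) * risingFac (θ + (n : ℝ) - (s : ℝ) + σ) (m - l) *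
            cgfc s 1 (σ - l) * cgfc (n - s) (j - 1) σ := by
  obtain ⟨j, rfl⟩ := Nat.exists_eq_add_of_le' hj1
  have hrhs := sum_cgfc_one_mul_cgfc σ θ (oldSet n m) j l m (by omega)
  have hcgfc := cgfc_card_eq_sum_partsJOf σ (oldSet n m) (j + 1)
  rw [card_oldSet] at hrhs hcgfc
  rw [condExpK, sum_withJ_Rlcnt_mul_gibbsW_EPV, sum_partsJOf_gibbsW,
    mul_div_mul_left _ _ hVnj.ne', Nat.add_sub_cancel, hcgfc,
    show ∀ a b c d : ℝ, a * b * c * d = a * (b * c * d) from fun _ _ _ _ => by ring, hrhs,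
    one_div_mul_eq_div, mul_assoc, mul_div_mul_left _ _ (pow_ne_zero _ hσ0.ne'), div_div,
    mul_comm (risingFac _ _)]

/-- Ewens–Pitman, expected number of old species re-observed with
frequency `l`, given only the number of blocks. -/
theorem looking_backward_freq_estimator_incomplete_EP
    (n m j : ℕ) (hn : 1 ≤ n) (hm : 1 ≤ m) (hj1 : 1 ≤ j) (hjn : j ≤ n)
    (σ θ : ℝ) (hσ0 : 0 < σ) (hσ1 : σ < 1) (hθ : -σ < θ)
    (hVnj : 0 < EPV σ θ n j)
    (l : ℕ) (hl1 : 1 ≤ l) (hlm : l ≤ m) :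
    condExpK σ (EPV σ θ) n m j (fun ρ => (Rlcnt n m l ρ : ℝ)) =
      (1 / (cgfc n j σ * risingFac (θ + n) m)) * (Nat.choose m l : ℝ) *
        (-σ * risingFac (1 - σ) (l - 1)) *
        ∑ s ∈ Finset.Icc 1 (n - (j - 1)),
          (Nat.choose n s : ℝ) * risingFac (θ + (n : ℝ) - (s : ℝ) + σ) (m - l) *
            cgfc s 1 (σ - l) * cgfc (n - s) (j - 1) σ :=
  looking_backward_freq_estimator_incomplete_EP_general n m j hj1 σ θ hσ0 hVnj l hl1
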